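/- The coefficients C_l = Σ_{k≥l} Σ_{m=0}^{l} binom(k-1,l)·binom(l,m)·(-1)^{l+m}·(k/z)·p_k·θ(m/k - T) are the coefficients of the power series expansion of g(φ) = Σ_k (k/z)p_k Σ_{m≥kT} B_{k-1,m}[φ] around φ = 0; that is, for each fixed finite-support degree distribution p_k, Σ_{l≥0} C_l φ^l = g(φ) for all φ ∈ [0,1]. -/

import Mathlib

/-- Heaviside step function: θ(y) = 1 if y ≥ 0, else 0. -/
noncomputable def heaviside (y : ℝ) : ℝ := if 0 ≤ y then 1 else 0

/-!
The Bernstein basis polynomial `C(n,m) φ^m (1-φ)^(n-m)` has the monomial expansion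
`Σ_l C(n,l) C(l,m) (-1)^(l+m) φ^l`: expand `(1-φ)^(n-m)` by the binomial theorem and use
`C(n,l) C(l,m) = C(n,m) C(n-m,l-m)`. Applied with `n = k - 1` to every term of `g`, the identity
follows by exchanging the finite sums over `l`, `k` and `m`.
-/

open Finset

section BernsteinExpansion

variable {R : Type*} [CommRing R]

theorem sum_range_choose_mul_choose_mul_neg_one_pow_mul_pow {n N : ℕ} (hn : n < N) (m : ℕ)
    (x : R) :
    ∑ l ∈ range N, (n.choose l * l.choose m * (-1) ^ (l + m) * x ^ l : R)
      = n.choose m * x ^ m * (1 - x) ^ (n - m) := by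
  have choose_mul_choose_eq_zero {l : ℕ} (hl : l < m ∨ n < l) : n.choose l * l.choose m = 0 := by
    rcases hl with hl | hl <;> simp [Nat.choose_eq_zero_of_lt hl]
  rcases lt_or_ge n m with hnm | hmn
  · rw [Nat.choose_eq_zero_of_lt hnm, Nat.cast_zero, zero_mul, zero_mul]
    refine sum_eq_zero fun l _ => ?_
    rw [← Nat.cast_mul, choose_mul_choose_eq_zero (by omega), Nat.cast_zero, zero_mul, zero_mul]
  have support : Ico m (n + 1) ⊆ range N := fun l hl => by simp at hl ⊢; omega
  rw [← sum_subset support fun l _ hl => by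
      rw [← Nat.cast_mul, choose_mul_choose_eq_zero (by simp at hl; omega)]; simp,
    sum_Ico_eq_sum_range, show n + 1 - m = n - m + 1 by omega, sub_eq_neg_add, add_pow,
    mul_sum]
  refine sum_congr rfl fun j _ => ?_
  have choose_mul :
      (n.choose (m + j) : R) * (m + j).choose m = n.choose m * (n - m).choose j := by
    have := Nat.choose_mul (n := n) (k := m + j) (s := m) (by omega)
    rw [Nat.add_sub_cancel_left] at this
    exact_mod_cast congrArg (Nat.cast : ℕ → R) this
  rw [choose_mul, show m + j + m = j + 2 * m by ring, pow_add, pow_mul, neg_one_sq, neg_pow]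
  ring

theorem sum_range_sum_choose_mul_choose_mul_neg_one_pow {n N : ℕ} (hn : n < N) (f : ℕ → R)
    (x : R) :
    ∑ l ∈ range N, (∑ m ∈ range (l + 1), n.choose l * l.choose m * (-1) ^ (l + m) * f m) * x ^ l
      = ∑ m ∈ range (n + 1), f m * (n.choose m * x ^ m * (1 - x) ^ (n - m)) := by
  calc _ = ∑ l ∈ range N, ∑ m ∈ range N,
        f m * (n.choose l * l.choose m * (-1) ^ (l + m) * x ^ l : R) := by
        refine sum_congr rfl fun l hl => ?_
        rw [sum_mul]
        refine (sum_subset (range_subset_range.mpr (by simp at hl; omega)) fun m _ hm => ?_).trans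
          (sum_congr rfl fun m _ => by ring)
        rw [Nat.choose_eq_zero_of_lt (n := l) (by simp at hm; omega)]
        simp
    _ = ∑ m ∈ range N, f m * (n.choose m * x ^ m * (1 - x) ^ (n - m)) := by
        rw [sum_comm]
        simp_rw [← mul_sum, sum_range_choose_mul_choose_mul_neg_one_pow_mul_pow hn]
    _ = _ := by
        refine (sum_subset (range_subset_range.mpr hn) fun m _ hm => ?_).symm
        rw [Nat.choose_eq_zero_of_lt (by simp at hm; omega)]
        simp

theorem sum_range_sum_sum_choose_pred_mul (K : ℕ) (w : ℕ → ℕ → R) (hw : ∀ m, w 0 m = 0)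
    (x : R) :
    ∑ l ∈ range K, (∑ k ∈ range K, ∑ m ∈ range (l + 1),
        (k - 1).choose l * l.choose m * (-1) ^ (l + m) * w k m) * x ^ l
      = ∑ k ∈ range K, ∑ m ∈ range k,
          w k m * ((k - 1).choose m * x ^ m * (1 - x) ^ (k - 1 - m)) := by
  simp only [sum_mul]
  rw [sum_comm]
  refine sum_congr rfl fun k hk => ?_
  rcases Nat.eq_zero_or_pos k with rfl | hk0
  -- `0 - 1 = 0`, so for `k = 0` the left side does not vanish on its own: `hw` kills it.
  · simp [hw]
  simp only [← sum_mul]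
  rw [sum_range_sum_choose_mul_choose_mul_neg_one_pow (by simp at hk; omega),
    Nat.sub_add_cancel hk0]

end BernsteinExpansion

theorem stmt7_general (K : ℕ) (p : ℕ → ℝ) (T : ℝ) (z : ℝ) :
    ∀ φ ∈ Set.Icc (0 : ℝ) 1,
      ∑ l ∈ Finset.range K,
          (∑ k ∈ Finset.range K, ∑ m ∈ Finset.range (l + 1),
              ((k - 1).choose l : ℝ) * (l.choose m : ℝ) * (-1 : ℝ) ^ (l + m) *
                ((k : ℝ) / z) * p k * heaviside ((m : ℝ) / (k : ℝ) - T)) * φ ^ l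
        = ∑ k ∈ Finset.range K, ((k : ℝ) / z) * p k *
            ∑ m ∈ Finset.range k,
              heaviside ((m : ℝ) / (k : ℝ) - T) *
                (((k - 1).choose m : ℝ) * φ ^ m * (1 - φ) ^ (k - 1 - m)) := by
  intro φ _
  have expansion := sum_range_sum_sum_choose_pred_mul K
    (fun k m => (k : ℝ) / z * p k * heaviside ((m : ℝ) / (k : ℝ) - T)) (by simp) φ
  simp only [mul_sum, mul_assoc] at expansion ⊢
  exact expansion

/-- The coefficients
C_l = Σ_{k≥l} Σ_{m=0}^{l} C(k-1,l)·C(l,m)·(-1)^{l+m}·(k/z)·p_k·θ(m/k - T)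
are the power-series coefficients of
g(φ) = Σ_k (k/z)·p_k·Σ_{m ≥ kT} B_{k-1,m}[φ] around φ = 0:
for every finitely supported degree distribution, Σ_l C_l φ^l = g(φ) on [0,1]. -/
theorem stmt7 (K : ℕ) (p : ℕ → ℝ) (T : ℝ) (hT0 : 0 < T) (hT1 : T < 1)
    (hp0 : ∀ k, 0 ≤ p k) (hsupp : ∀ k, K ≤ k → p k = 0)
    (hp1 : ∑ k ∈ Finset.range K, p k = 1)
    (z : ℝ) (hzdef : z = ∑ k ∈ Finset.range K, (k : ℝ) * p k) (hz : 0 < z) :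
    ∀ φ ∈ Set.Icc (0 : ℝ) 1,
      ∑ l ∈ Finset.range K,
          (∑ k ∈ Finset.range K, ∑ m ∈ Finset.range (l + 1),
              ((k - 1).choose l : ℝ) * (l.choose m : ℝ) * (-1 : ℝ) ^ (l + m) *
                ((k : ℝ) / z) * p k * heaviside ((m : ℝ) / (k : ℝ) - T)) * φ ^ l
        = ∑ k ∈ Finset.range K, ((k : ℝ) / z) * p k *
            ∑ m ∈ Finset.range k,
              heaviside ((m : ℝ) / (k : ℝ) - T) *
                (((k - 1).choose m : ℝ) * φ ^ m * (1 - φ) ^ (k - 1 - m)) :=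
  stmt7_general K p T z
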